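/- Let X be a Hilbert space with dual X', and let A : X → X' be a bounded linear operator. Suppose there exist a compact linear operator T : X → X' and a constant α > 0 such that ⟨(A+T)x, x⟩ ≥ α‖x‖² for all x ∈ X, and suppose ⟨Ax, x⟩ > 0 for all x ∈ X \ {0}. Then there exists a constant α₁ > 0 such that ⟨Ax, x⟩ ≥ α₁‖x‖² for all x ∈ X. -/

import Mathlib

/-!
If `A` were not coercive, there would be unit vectors `u n` with `A (u n) (u n) → 0`. The vectors
`A (u n)` need not tend to zero, but for the symmetric part `S` of `A`, which is positive
semidefinite, Cauchy–Schwarz gives `‖S (u n)‖² ≤ ‖S‖ * A (u n) (u n) → 0`. Compactness of `T` makes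
`T (u n)` converge along a subsequence. As `S + T` has the same quadratic form as `A + T`, it is
coercive, hence bounded below, so along that subsequence `u n` is Cauchy; its limit `w` is a unit
vector with `A w w = 0`.
-/

open Filter Topology

namespace ContinuousLinearMap

variable {E : Type*} [SeminormedAddCommGroup E] [NormedSpace ℝ E]

theorem norm_apply_le_sqrt_of_symm {S : E →L[ℝ] E →L[ℝ] ℝ} (hS : ∀ x y, S x y = S y x)
    (hS₀ : ∀ x, 0 ≤ S x x) (x : E) : ‖S x‖ ≤ √(‖S‖ * S x x) := by
  refine opNorm_le_bound _ (Real.sqrt_nonneg _) fun y => ?_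
  have hCS : S x y ^ 2 ≤ S x x * S y y := by
    simpa [sq, ← hS x y] using
      LinearMap.BilinForm.apply_mul_apply_le_of_forall_zero_le S.toLinearMap₁₂ hS₀ x y
  have hSy : S y y ≤ ‖S‖ * ‖y‖ ^ 2 := by
    rw [sq, ← mul_assoc]
    exact (Real.le_norm_self _).trans (S.le_opNorm₂ y y)
  have : S x y ^ 2 ≤ ‖S‖ * S x x * ‖y‖ ^ 2 :=
    calc S x y ^ 2 ≤ S x x * S y y := hCS
      _ ≤ S x x * (‖S‖ * ‖y‖ ^ 2) := by gcongr; exact hS₀ x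
      _ = ‖S‖ * S x x * ‖y‖ ^ 2 := by ring
  rw [← Real.sqrt_sq (norm_nonneg y), ← Real.sqrt_mul' _ (sq_nonneg _)]
  exact Real.abs_le_sqrt this

noncomputable def symmPart (B : E →L[ℝ] E →L[ℝ] ℝ) : E →L[ℝ] E →L[ℝ] ℝ :=
  (2⁻¹ : ℝ) • (B + B.flip)

variable (B : E →L[ℝ] E →L[ℝ] ℝ)

theorem symmPart_apply (x y : E) : B.symmPart x y = 2⁻¹ * (B x y + B y x) := rfl

theorem symmPart_apply_comm (x y : E) : B.symmPart x y = B.symmPart y x := by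
  simp only [symmPart_apply, add_comm]

theorem symmPart_apply_self (x : E) : B.symmPart x x = B x x := by
  rw [symmPart_apply]
  ring

theorem norm_symmPart_apply_le {B : E →L[ℝ] E →L[ℝ] ℝ} (hB₀ : ∀ x, 0 ≤ B x x) (x : E) :
    ‖B.symmPart x‖ ≤ √(‖B.symmPart‖ * B x x) := by
  simpa only [symmPart_apply_self] using norm_apply_le_sqrt_of_symm B.symmPart_apply_comm
    (fun x => by simpa only [symmPart_apply_self] using hB₀ x) x

end ContinuousLinearMap

namespace IsCoercive

variable {E : Type*} [NormedAddCommGroup E] [NormedSpace ℝ E] {B : E →L[ℝ] E →L[ℝ] ℝ}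

theorem exists_antilipschitzWith (hB : IsCoercive B) : ∃ K, AntilipschitzWith K B := by
  obtain ⟨C, hC, hCB⟩ := hB
  refine ⟨C⁻¹.toNNReal, B.antilipschitz_of_bound fun v => ?_⟩
  rw [Real.coe_toNNReal _ (inv_nonneg.2 hC.le), inv_mul_eq_div, le_div_iff₀ hC]
  rcases (norm_nonneg v).eq_or_lt with hv | hv
  · rw [← hv, zero_mul]
    exact norm_nonneg _
  · refine le_of_mul_le_mul_right ?_ hv
    calc ‖v‖ * C * ‖v‖ = C * ‖v‖ * ‖v‖ := by ring
      _ ≤ B v v := hCB v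
      _ ≤ ‖B v‖ * ‖v‖ := (Real.le_norm_self _).trans ((B v).le_opNorm v)

theorem exists_tendsto_of_tendsto_apply [CompleteSpace E] (hB : IsCoercive B) {u : ℕ → E}
    {f : E →L[ℝ] ℝ} (hu : Tendsto (fun n => B (u n)) atTop (𝓝 f)) :
    ∃ w, Tendsto u atTop (𝓝 w) := by
  obtain ⟨K, hK⟩ := hB.exists_antilipschitzWith
  refine cauchySeq_tendsto_of_complete ?_
  rw [CauchySeq, ← (hK.isUniformInducing B.uniformContinuous).cauchy_map_iff, map_map]
  exact hu.cauchySeq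

theorem exists_norm_eq_one_tendsto_of_not_isCoercive (hB₀ : ∀ x, 0 ≤ B x x)
    (hB : ¬IsCoercive B) :
    ∃ u : ℕ → E, (∀ n, ‖u n‖ = 1) ∧ Tendsto (fun n => B (u n) (u n)) atTop (𝓝 0) := by
  have hsmall (n : ℕ) : ∃ u : E, ‖u‖ = 1 ∧ B u u < 1 / (n + 1) := by
    obtain ⟨x, hx⟩ : ∃ x, B x x < 1 / (n + 1) * ‖x‖ * ‖x‖ := by
      by_contra! h
      exact hB ⟨_, Nat.one_div_pos_of_nat, h⟩
    have hx₀ : x ≠ 0 := by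
      rintro rfl
      simp at hx
    refine ⟨‖x‖⁻¹ • x, norm_smul_inv_norm hx₀, ?_⟩
    calc B (‖x‖⁻¹ • x) (‖x‖⁻¹ • x) = B x x / (‖x‖ * ‖x‖) := by
          simp only [map_smul, smul_apply, smul_eq_mul]
          field_simp
      _ < 1 / (n + 1) := by rwa [div_lt_iff₀ (by positivity), ← mul_assoc]
  choose u hu hBu using hsmall
  exact ⟨u, hu, squeeze_zero (fun n => hB₀ _) (fun n => (hBu n).le)
    tendsto_one_div_add_atTop_nhds_zero_nat⟩

theorem of_add_isCompactOperator [CompleteSpace E] {A T : E →L[ℝ] E →L[ℝ] ℝ}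
    (hAT : IsCoercive (A + T)) (hT : IsCompactOperator T) (hA : ∀ x, x ≠ 0 → 0 < A x x) :
    IsCoercive A := by
  have hA₀ (x : E) : 0 ≤ A x x := by
    rcases eq_or_ne x 0 with rfl | hx
    · simp
    · exact (hA x hx).le
  by_contra hnot
  obtain ⟨u, hu, hAu⟩ := exists_norm_eq_one_tendsto_of_not_isCoercive hA₀ hnot
  have hSu : Tendsto (fun n => A.symmPart (u n)) atTop (𝓝 0) :=
    squeeze_zero_norm (fun n => A.norm_symmPart_apply_le hA₀ (u n))
      (by simpa using (hAu.const_mul ‖A.symmPart‖).sqrt)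
  obtain ⟨K, hK, hTK⟩ := hT.image_closedBall_subset_compact 1
  obtain ⟨f, -, φ, hφ, hTu⟩ := hK.tendsto_subseq fun n => hTK ⟨u n, by simp [hu], rfl⟩
  have hST : IsCoercive (A.symmPart + T) := by
    obtain ⟨C, hC, hCAT⟩ := hAT
    exact ⟨C, hC, fun x => by simpa [A.symmPart_apply_self] using hCAT x⟩
  obtain ⟨w, hw⟩ := hST.exists_tendsto_of_tendsto_apply (u := u ∘ φ)
    (by simpa using (hSu.comp hφ.tendsto_atTop).add hTu)
  have hw₁ : ‖w‖ = 1 := tendsto_nhds_unique hw.norm (by simp [hu])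
  have hAw : A w w = 0 :=
    tendsto_nhds_unique ((A.continuous₂.tendsto (w, w)).comp (hw.prodMk_nhds hw))
      (hAu.comp hφ.tendsto_atTop)
  exact (hA w (norm_ne_zero_iff.1 (by simp [hw₁]))).ne' hAw

end IsCoercive

/-- If a bounded operator `A` from a Hilbert space into its dual is coercive up to a
compact perturbation `T` and strictly positive, then it is coercive. -/
theorem stmt0 {X : Type*} [NormedAddCommGroup X] [InnerProductSpace ℝ X] [CompleteSpace X]
    (A T : X →L[ℝ] StrongDual ℝ X) (hT : IsCompactOperator (⇑T))
    (α : ℝ) (hα : 0 < α)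
    (hcoer : ∀ x : X, α * ‖x‖ ^ 2 ≤ (A + T) x x)
    (hpos : ∀ x : X, x ≠ 0 → 0 < A x x) :
    ∃ α₁ : ℝ, 0 < α₁ ∧ ∀ x : X, α₁ * ‖x‖ ^ 2 ≤ A x x := by
  have hAT : IsCoercive (A + T) := ⟨α, hα, fun x => by rw [mul_assoc, ← sq]; exact hcoer x⟩
  obtain ⟨C, hC, hCA⟩ := hAT.of_add_isCompactOperator hT hpos
  exact ⟨C, hC, fun x => by rw [sq, ← mul_assoc]; exact hCA x⟩
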